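/- arXiv:2005.08073 — 2 statements merged into one kernel-verified Lean document; each statement's English description precedes it below -/
import Mathlib

section
/- For every integer l ≥ 2 there exists a constant C such that for every properly edge-coloured graph G on n vertices, the number of non-rainbow copies of C_{2l+1} in G is at most C·(n^{2l−1} + R), where R is the number of rainbow copies of C_{2l+1} in G. -/
open SimpleGraph

def ProperColoring {V γ : Type*} (G : SimpleGraph V) (c : Sym2 V → γ) : Prop :=
  ∀ e f : Sym2 V, e ∈ G.edgeSet → f ∈ G.edgeSet → e ≠ f → (∃ v, v ∈ e ∧ v ∈ f) → c e ≠ c f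

def HasRainbowCycle {V γ : Type*} (G : SimpleGraph V) (c : Sym2 V → γ) (t : ℕ) : Prop :=
  ∃ (u : V) (w : G.Walk u u), w.IsCycle ∧ w.length = t ∧ (w.edges.map c).Nodup

/-!
Rotate a non-rainbow cycle `x` of length `k` so that its edges `0` and `d` form a closest pair of
equally coloured edges. Then `2 ≤ d ≤ k - d`, the arc from `x 1` to `x (d + 1)` is rainbow, and
by properness `x 0` is determined by that arc and `x d` by the complementary arc, a path of length
`m = k - d`. Fix `u = x 1` and `w = x (d + 1)`, and let `P` be the number of paths of length `m`
from `w` to `u`. Such an `x` is determined by its closing path and `d - 2` further vertices, and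
also by its rainbow arc and `m - 2` further vertices. On the other hand, each rainbow path of
length `d` from `u` to `w` is closed into a rainbow cycle by all but `O(n^(m-2))` of the `P` paths,
since each obstruction (a shared vertex or a repeated colour) pins down an inner vertex of the
closing path. So if `P = O(n^(m-2))` there are `O(n^(k-4))` such `x`, and otherwise they are
outnumbered by the rainbow cycles through `u` and `w`. Summing over `u`, `w`, `d` and the
rotation gives `O(n^(k-2) + R)`.
-/

open Function

namespace Set

variable {α β : Type*} {s : Set α} {t : Set β} {f : α → β} {r : ℕ}

theorem ncard_sep_eq_card_filter [DecidableEq β] (hs : s.Finite) (b : β) :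
    {a ∈ s | f a = b}.ncard = {a ∈ hs.toFinset | f a = b}.card := by
  rw [← ncard_coe_finset]; congr; ext; simp

theorem ncard_eq_sum_ncard_fiber [Fintype β] (s : Set α) (f : α → β)
    (hs : s.Finite := by toFinite_tac) : s.ncard = ∑ b, {a ∈ s | f a = b}.ncard := by
  classical
  simp only [ncard_sep_eq_card_filter hs, ncard_eq_toFinset_card s hs]
  exact Finset.card_eq_sum_card_fiberwise fun _ _ => Finset.mem_coe.2 (Finset.mem_univ _)

theorem ncard_le_mul_ncard_of_mapsTo (hf : MapsTo f s t)
    (hr : ∀ b ∈ t, {a ∈ s | f a = b}.ncard ≤ r)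
    (hs : s.Finite := by toFinite_tac) (ht : t.Finite := by toFinite_tac) :
    s.ncard ≤ r * t.ncard := by
  classical
  rw [ncard_eq_toFinset_card s hs, ncard_eq_toFinset_card t ht]
  refine Finset.card_le_mul_card_image_of_maps_to (f := f) (fun a ha => ?_) r fun b hb => ?_
  · simpa using hf (by simpa using ha)
  · simpa [ncard_sep_eq_card_filter hs] using hr b (by simpa using hb)

theorem mul_ncard_le_ncard_of_mapsTo (hf : MapsTo f s t)
    (hr : ∀ b ∈ t, r ≤ {a ∈ s | f a = b}.ncard)
    (hs : s.Finite := by toFinite_tac) (ht : t.Finite := by toFinite_tac) :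
    r * t.ncard ≤ s.ncard := by
  classical
  rw [ncard_eq_toFinset_card s hs, ncard_eq_toFinset_card t ht]
  refine Finset.mul_card_image_le_card_of_maps_to (f := f) (fun a ha => ?_) r fun b hb => ?_
  · simpa using hf (by simpa using ha)
  · simpa [ncard_sep_eq_card_filter hs] using hr b (by simpa using hb)

theorem ncard_iUnion_le_card_mul {ι : Type*} [Fintype ι] {s : ι → Set α}
    (h : ∀ i, (s i).ncard ≤ r) : (⋃ i, s i).ncard ≤ Fintype.card ι * r := by
  refine (Set.ncard_iUnion_le_of_fintype s).trans ?_
  simpa using Finset.sum_le_sum fun i (_ : i ∈ Finset.univ) => h i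

theorem ncard_le_card_pow_of_eqOn {ι : Type*} [Fintype β] {s : Set (ι → β)} (K : Finset ι)
    (h : ∀ x ∈ s, ∀ y ∈ s, Set.EqOn x y K → x = y) :
    s.ncard ≤ Fintype.card β ^ K.card := by
  classical
  calc s.ncard ≤ (Set.univ : Set (K → β)).ncard :=
        Set.ncard_le_ncard_of_injOn (fun x i => x i) (fun _ _ => Set.mem_univ _)
          (fun x hx y hy hxy => h x hx y hy fun i hi => congrFun hxy ⟨i, hi⟩)
    _ = Fintype.card β ^ K.card := by simp [Set.ncard_univ]

end Set

variable {V γ : Type*}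

theorem ProperColoring.eq_of_color_eq {G : SimpleGraph V} {c : Sym2 V → γ}
    (hc : ProperColoring G c) {v w₁ w₂ : V} (h₁ : G.Adj v w₁) (h₂ : G.Adj v w₂)
    (h : c s(v, w₁) = c s(v, w₂)) : w₁ = w₂ := by
  by_contra hne
  refine hc _ _ h₁ h₂ ?_ ⟨v, Sym2.mem_mk_left _ _, Sym2.mem_mk_left _ _⟩ h
  rw [Ne, Sym2.eq_iff]
  rintro (⟨-, h⟩ | ⟨rfl, rfl⟩)
  exacts [hne h, G.irrefl h₁]

def pathColor (c : Sym2 V → γ) {m : ℕ} (q : Fin (m + 1) → V) (i : Fin m) : γ :=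
  c s(q i.castSucc, q i.succ)

def RainbowClosing (c : Sym2 V → γ) {d m : ℕ} (p : Fin (d + 1) → V) (q : Fin (m + 1) → V) :
    Prop :=
  (∀ i j, q i = p j → i = 0 ∨ i = Fin.last m) ∧
    (∀ i j, pathColor c q i ≠ pathColor c p j) ∧ Injective (pathColor c q)

section Arc

open Fin.NatCast

variable {k : ℕ} [NeZero k]

theorem Fin.eq_of_natCast_add_eq {a i j : ℕ} (hi : i < k) (hj : j < k)
    (h : ((a + i : ℕ) : Fin k) = (a + j : ℕ)) : i = j := by
  rw [Nat.cast_add, Nat.cast_add] at h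
  simpa [Fin.ext_iff, Fin.val_natCast, Nat.mod_eq_of_lt hi, Nat.mod_eq_of_lt hj] using
    add_left_cancel h

theorem Fin.exists_natCast_eq_or {d m : ℕ} (hk : d + m = k) (j : Fin k) :
    (∃ i : Fin d, ((0 + i : ℕ) : Fin k) = j) ∨
      ∃ i : Fin m, ((d + i : ℕ) : Fin k) = j := by
  by_cases hj : j.val < d
  · exact Or.inl ⟨⟨j, hj⟩, by simp⟩
  · refine Or.inr ⟨⟨j - d, by omega⟩, ?_⟩
    exact Fin.ext (by rw [Fin.val_natCast, Nat.add_sub_cancel' (by omega), Nat.mod_eq_of_lt j.isLt])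

theorem Fin.exists_minimal_shift_of_not_injective {α : Type*} {f : Fin k → α}
    (hf : ¬Injective f) :
    ∃ s : Fin k, ∃ d : ℕ, 0 < d ∧ d ≤ k - d ∧ f s = f (s + d) ∧
      ∀ δ, 0 < δ → δ < d → ∀ t, f t ≠ f (t + δ) := by
  classical
  have hex : ∃ δ, 0 < δ ∧ δ < k ∧ ∃ t : Fin k, f t = f (t + δ) := by
    obtain ⟨a, b, hab, hne⟩ := Function.not_injective_iff.1 hf
    refine ⟨(b - a : Fin k), ?_, (b - a).isLt, a, by rwa [Fin.cast_val_eq_self, add_sub_cancel]⟩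
    exact Nat.pos_of_ne_zero fun h => hne (sub_eq_zero.1 (Fin.ext h)).symm
  obtain ⟨hd, hdk, s, hs⟩ := Nat.find_spec hex
  refine ⟨s, Nat.find hex, hd, ?_, hs, fun δ hδ hδd t ht =>
    Nat.find_min hex hδd ⟨hδ, by omega, t, ht⟩⟩
  -- `k - d` is a shift with a repeat as well
  by_contra! hlt
  refine Nat.find_min hex hlt ⟨by omega, by omega, s + Nat.find hex, ?_⟩
  rw [add_assoc, ← Nat.cast_add, Nat.add_sub_cancel' hdk.le, Fin.natCast_self, add_zero]
  exact hs.symm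

def arc (x : Fin k → V) (a m : ℕ) : Fin (m + 1) → V := fun i => x (a + i : ℕ)

theorem arc_castSucc (x : Fin k → V) (a : ℕ) {m : ℕ} (i : Fin m) :
    arc x a m i.castSucc = x (a + i : ℕ) := rfl

theorem arc_succ (x : Fin k → V) (a : ℕ) {m : ℕ} (i : Fin m) :
    arc x a m i.succ = x ((a + i : ℕ) + 1) := by
  simp [arc, add_assoc]

theorem pathColor_arc (c : Sym2 V → γ) (x : Fin k → V) (a : ℕ) {m : ℕ} (i : Fin m) :
    pathColor c (arc x a m) i = c s(x (a + i : ℕ), x ((a + i : ℕ) + 1)) := by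
  rw [pathColor, arc_castSucc, arc_succ]

theorem apply_eq_of_arc_eq {x x' : Fin k → V} {a m : ℕ} (h : arc x a m = arc x' a m) {i : ℕ}
    (hi : i ≤ m) {j : Fin k} (hj : (a + i) % k = j) : x j = x' j := by
  have := congrFun h ⟨i, Nat.lt_succ_of_le hi⟩
  rwa [arc, arc, show ((a + i : ℕ) : Fin k) = j from
    Fin.ext (by rw [Fin.val_natCast]; exact hj)] at this

def glue (k : ℕ) {d m : ℕ} (p : Fin (d + 1) → V) (q : Fin (m + 1) → V) : Fin k → V :=
  fun j => if j.val ≤ d then p j.val else q (j.val - d : ℕ)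

variable {d m : ℕ} (p : Fin (d + 1) → V) (q : Fin (m + 1) → V)

theorem arc_glue_left (hk : d + m = k) (hm : 1 ≤ m) : arc (glue k p q) 0 d = p := by
  funext i
  have hi : ((0 + i : ℕ) : Fin k).val = i := by
    rw [zero_add, Fin.val_natCast, Nat.mod_eq_of_lt (by omega)]
  simp only [arc, glue, hi, if_pos (Fin.is_le i), Fin.cast_val_eq_self]

theorem arc_glue_right (hk : d + m = k) (h₀ : q 0 = p (Fin.last d))
    (h₁ : q (Fin.last m) = p 0) : arc (glue k p q) d m = q := by
  funext i
  rcases (Fin.is_le i).lt_or_eq with hi | hi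
  · have hv : ((d + i : ℕ) : Fin k).val = d + i := by
      rw [Fin.val_natCast, Nat.mod_eq_of_lt (by omega)]
    simp only [arc, glue, hv]
    split_ifs with hdi
    · obtain rfl : i = 0 := Fin.ext (by rw [Fin.val_zero]; omega)
      rw [h₀, Fin.val_zero, add_zero, Fin.natCast_eq_last]
    · rw [Nat.add_sub_cancel_left, Fin.cast_val_eq_self]
  · have hv : ((d + i : ℕ) : Fin k).val = 0 := by
      rw [Fin.val_natCast, hi, hk, Nat.mod_self]
    simp only [arc, glue, hv, if_pos (Nat.zero_le d)]
    rw [show i = Fin.last m from Fin.ext hi, h₁]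
    rfl

end Arc

namespace SimpleGraph

open Fin.NatCast

variable (G : SimpleGraph V) (c : Sym2 V → γ) (k d : ℕ) [NeZero k]

def pathTuples (m : ℕ) (w u : V) : Set (Fin (m + 1) → V) :=
  {q | Injective q ∧ (∀ i : Fin m, G.Adj (q i.castSucc) (q i.succ)) ∧ q 0 = w ∧
    q (Fin.last m) = u}

def rainbowPathTuples (m : ℕ) (w u : V) : Set (Fin (m + 1) → V) :=
  {q ∈ G.pathTuples m w u | Injective (pathColor c q)}

def cycleTuples : Set (Fin k → V) :=
  {x | Injective x ∧ ∀ i, G.Adj (x i) (x (i + 1))}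

def rainbowCycleTuples : Set (Fin k → V) :=
  {x | Injective x ∧ (∀ i, G.Adj (x i) (x (i + 1))) ∧ Injective fun i => c s(x i, x (i + 1))}

def nonrainbowCycleTuples : Set (Fin k → V) :=
  {x | Injective x ∧ (∀ i, G.Adj (x i) (x (i + 1))) ∧
    ¬Injective fun i => c s(x i, x (i + 1))}

/-- A closest pair of equally coloured edges, rotated to the edges `0` and `d`. -/
def minRepeatTuples : Set (Fin k → V) :=
  {x ∈ G.cycleTuples k |
    c s(x 0, x 1) = c s(x d, x (d + 1)) ∧ Injective (pathColor c (arc x 1 d))}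

variable {G c k d} {m : ℕ} {u w : V}

theorem arc_mem_pathTuples {x : Fin k → V} (hx : x ∈ G.cycleTuples k) (hm : m < k) (a : ℕ) :
    arc x a m ∈ G.pathTuples m (x a) (x (a + m : ℕ)) :=
  ⟨fun i j h => Fin.ext (Fin.eq_of_natCast_add_eq (by omega) (by omega) (hx.1 h)),
    fun i => arc_succ x a i ▸ hx.2 _, by simp [arc], rfl⟩

theorem arc_mem_rainbowPathTuples {x : Fin k → V} (hx : x ∈ G.rainbowCycleTuples c k)
    (hm : m < k) (a : ℕ) : arc x a m ∈ G.rainbowPathTuples c m (x a) (x (a + m : ℕ)) :=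
  ⟨arc_mem_pathTuples ⟨hx.1, hx.2.1⟩ hm a, fun i j h => by
    rw [pathColor_arc, pathColor_arc] at h
    exact Fin.ext (Fin.eq_of_natCast_add_eq (by omega) (by omega) (hx.2.2 h))⟩

theorem mem_rainbowCycleTuples_of_arc {d : ℕ} (hk : d + m = k) {y : Fin k → V}
    (hp : arc y 0 d ∈ G.rainbowPathTuples c d u w) (hq : arc y d m ∈ G.pathTuples m w u)
    (hpq : RainbowClosing c (arc y 0 d) (arc y d m)) : y ∈ G.rainbowCycleTuples c k := by
  have hpq' (i₁ : Fin d) (i₂ : Fin m) :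
      arc y 0 d i₁.castSucc ≠ arc y d m i₂.castSucc := by
    intro h
    rcases hpq.1 _ _ h.symm with h₀ | hl
    · rw [h₀, hq.2.2.1, ← hp.1.2.2.2] at h
      exact (Fin.castSucc_lt_last i₁).ne (hp.1.1 h)
    · exact (Fin.castSucc_lt_last i₂).ne hl
  refine ⟨fun j₁ j₂ h => ?_, fun j => ?_, fun j₁ j₂ h => ?_⟩
  · rcases Fin.exists_natCast_eq_or hk j₁ with ⟨i₁, rfl⟩ | ⟨i₁, rfl⟩ <;>
      rcases Fin.exists_natCast_eq_or hk j₂ with ⟨i₂, rfl⟩ | ⟨i₂, rfl⟩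
    · rw [Fin.castSucc_injective _ (hp.1.1 (a₁ := i₁.castSucc) (a₂ := i₂.castSucc) h)]
    · exact absurd h (hpq' i₁ i₂)
    · exact absurd h.symm (hpq' i₂ i₁)
    · rw [Fin.castSucc_injective _ (hq.1 (a₁ := i₁.castSucc) (a₂ := i₂.castSucc) h)]
  · rcases Fin.exists_natCast_eq_or hk j with ⟨i, rfl⟩ | ⟨i, rfl⟩
    · exact arc_succ y 0 i ▸ hp.1.2.1 i
    · exact arc_succ y d i ▸ hq.2.1 i
  · simp only at h
    rcases Fin.exists_natCast_eq_or hk j₁ with ⟨i₁, rfl⟩ | ⟨i₁, rfl⟩ <;>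
      rcases Fin.exists_natCast_eq_or hk j₂ with ⟨i₂, rfl⟩ | ⟨i₂, rfl⟩ <;>
      simp only [← pathColor_arc] at h
    · rw [hp.2 h]
    · exact absurd h.symm (hpq.2.1 i₂ i₁)
    · exact absurd h (hpq.2.1 i₁ i₂)
    · rw [hpq.2.2 h]

theorem eq_of_forall_ne_of_color_eq (hc : ProperColoring G c) {x x' : Fin k → V}
    (hx : x ∈ G.cycleTuples k) (hx' : x' ∈ G.cycleTuples k) {r e : Fin k} (he : e ≠ r)
    (he' : e + 1 ≠ r) (hcol : c s(x r, x (r + 1)) = c s(x e, x (e + 1)))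
    (hcol' : c s(x' r, x' (r + 1)) = c s(x' e, x' (e + 1))) (h : ∀ j ≠ r, x j = x' j) :
    x = x' := by
  have hv := h _ fun h' => (hx.2 r).ne (congrArg x h'.symm)
  have hr : x r = x' r := by
    refine hc.eq_of_color_eq (hx.2 r).symm (hv ▸ (hx'.2 r).symm) ?_
    calc c s(x (r + 1), x r) = c s(x e, x (e + 1)) := by rw [Sym2.eq_swap, hcol]
      _ = c s(x' e, x' (e + 1)) := by rw [h e he, h _ he']
      _ = c s(x (r + 1), x' r) := by rw [← hcol', hv, Sym2.eq_swap]
  funext j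
  rcases eq_or_ne j r with rfl | hj
  exacts [hr, h j hj]

theorem exists_rotate_mem_minRepeatTuples (hc : ProperColoring G c) (hk : 3 ≤ k)
    {x : Fin k → V} (hx : x ∈ G.nonrainbowCycleTuples c k) :
    ∃ s : Fin k, ∃ d ∈ Finset.Icc 2 (k - 2),
      (fun j => x (j + s)) ∈ G.minRepeatTuples c k d := by
  obtain ⟨s, d, hd, hdk, hs, hmin⟩ := Fin.exists_minimal_shift_of_not_injective hx.2.2
  -- adjacent edges of equal colour would force `x s = x (s + 2)`
  have hd₁ : d ≠ 1 := by
    rintro rfl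
    simp only [Nat.cast_one] at hs
    have h := hx.1 <| hc.eq_of_color_eq (hx.2.1 s).symm (hx.2.1 (s + 1))
      (by rw [Sym2.eq_swap]; exact hs)
    rw [add_assoc, left_eq_add, ← Nat.cast_one, ← Nat.cast_add, Fin.natCast_eq_zero] at h
    exact absurd (Nat.le_of_dvd two_pos h) (by omega)
  refine ⟨s, d, Finset.mem_Icc.2 ⟨by omega, by omega⟩,
    ⟨hx.1.comp (add_left_injective s), fun j => ?_⟩, ?_, fun a b h => ?_⟩
  · simpa only [add_right_comm j 1 s] using hx.2.1 (j + s)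
  · simp only
    rw [zero_add, add_comm 1 s, add_right_comm (d : Fin k) 1 s, add_comm (d : Fin k) s]
    exact hs
  have hlt (a b : Fin d) (hab : a < b) :
      pathColor c (arc (fun j => x (j + s)) 1 d) a ≠
        pathColor c (arc (fun j => x (j + s)) 1 d) b := by
    intro h
    refine hmin (b - a) (by omega) (by omega) ((1 + a : ℕ) + s) ?_
    have ht : ((1 + a : ℕ) : Fin k) + s + (b - a : ℕ) = (1 + b : ℕ) + s := by
      rw [add_right_comm, ← Nat.cast_add, show 1 + a + (b - a : ℕ) = 1 + b by omega]
    simp only [pathColor_arc] at h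
    rw [ht, add_right_comm _ s 1, add_right_comm _ s 1]
    exact h
  by_contra hab
  rcases lt_or_gt_of_ne hab with hab | hab
  exacts [hlt a b hab h, hlt b a hab h.symm]

variable [Fintype V]

theorem ncard_le_card_pow_of_determined {s : Set (Fin (m + 1) → V)}
    (hs : s ⊆ G.pathTuples m w u)
    {r : Fin (m + 1)} (hr₀ : r ≠ 0) (hr : r ≠ Fin.last m)
    (h : ∀ q ∈ s, ∀ q' ∈ s, (∀ i ≠ r, q i = q' i) → q r = q' r) :
    s.ncard ≤ Fintype.card V ^ (m - 2) := by
  have hrK : r ∈ Finset.Ioo 0 (Fin.last m) := by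
    simp [Finset.mem_Ioo, Fin.pos_iff_ne_zero, Fin.lt_last_iff_ne_last, hr₀, hr]
  have hK : ((Finset.Ioo 0 (Fin.last m)).erase r).card = m - 2 := by
    rw [Finset.card_erase_of_mem hrK, Fin.card_Ioo]; simp; omega
  refine hK ▸ Set.ncard_le_card_pow_of_eqOn _ fun q hq q' hq' hqq' => ?_
  have hoff : ∀ i ≠ r, q i = q' i := by
    intro i hi
    rcases eq_or_ne i 0 with rfl | h₀
    · rw [(hs hq).2.2.1, (hs hq').2.2.1]
    rcases eq_or_ne i (Fin.last m) with rfl | hl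
    · rw [(hs hq).2.2.2, (hs hq').2.2.2]
    exact hqq' (by simp [Fin.pos_iff_ne_zero, Fin.lt_last_iff_ne_last, *])
  funext i
  rcases eq_or_ne i r with rfl | hi
  exacts [h q hq q' hq' hoff, hoff i hi]

theorem ncard_le_card_pow_of_color_determined (hc : ProperColoring G c) (hm : 2 ≤ m)
    {s : Set (Fin (m + 1) → V)} (hs : s ⊆ G.pathTuples m w u) (j : Fin m)
    (h : ∀ q ∈ s, ∀ q' ∈ s, (∀ i, i ≠ j.castSucc → i ≠ j.succ → q i = q' i) →
      pathColor c q j = pathColor c q' j) :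
    s.ncard ≤ Fintype.card V ^ (m - 2) := by
  have hne : j.castSucc ≠ j.succ := (Fin.castSucc_lt_succ (i := j)).ne
  by_cases hj : j.succ = Fin.last m
  · refine ncard_le_card_pow_of_determined hs (r := j.castSucc) ?_ (Fin.castSucc_lt_last j).ne
      fun q hq q' hq' hoff => ?_
    · simp only [Ne, Fin.ext_iff, Fin.val_succ, Fin.val_last, Fin.val_castSucc,
        Fin.val_zero] at hj ⊢
      omega
    have hsucc := hoff _ hne.symm
    refine hc.eq_of_color_eq ((hs hq).2.1 j).symm (hsucc ▸ ((hs hq').2.1 j).symm) ?_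
    have := h q hq q' hq' fun i h₁ _ => hoff i h₁
    rw [pathColor, pathColor, ← hsucc] at this
    rwa [Sym2.eq_swap (a := q j.castSucc), Sym2.eq_swap (a := q' j.castSucc)] at this
  · refine ncard_le_card_pow_of_determined hs (r := j.succ) (Fin.succ_ne_zero j) hj
      fun q hq q' hq' hoff => ?_
    have hcs := hoff _ hne
    refine hc.eq_of_color_eq ((hs hq).2.1 j) (hcs ▸ (hs hq').2.1 j) ?_
    have := h q hq q' hq' fun i _ h₂ => hoff i h₂
    rwa [pathColor, pathColor, ← hcs] at this

theorem ncard_pathTuples_apply_eq_le (i : Fin (m + 1)) (v : V) :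
    {q ∈ G.pathTuples m w u | i ≠ 0 ∧ i ≠ Fin.last m ∧ q i = v}.ncard ≤
      Fintype.card V ^ (m - 2) := by
  by_cases hi : i ≠ 0 ∧ i ≠ Fin.last m
  · exact ncard_le_card_pow_of_determined (fun _ hq => hq.1) hi.1 hi.2
      fun _ hq _ hq' _ => hq.2.2.2.trans hq'.2.2.2.symm
  · have : {q ∈ G.pathTuples m w u | i ≠ 0 ∧ i ≠ Fin.last m ∧ q i = v} = ∅ :=
      Set.sep_eq_empty_iff_mem_false.2 fun _ _ h => hi ⟨h.1, h.2.1⟩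
    simp [this]

theorem ncard_pathTuples_pathColor_eq_le (hc : ProperColoring G c) (hm : 2 ≤ m) (i : Fin m)
    (δ : γ) :
    {q ∈ G.pathTuples m w u | pathColor c q i = δ}.ncard ≤ Fintype.card V ^ (m - 2) :=
  ncard_le_card_pow_of_color_determined hc hm (fun _ hq => hq.1) i
    fun _ hq _ hq' _ => hq.2.trans hq'.2.symm

theorem ncard_pathTuples_pathColor_eq_pathColor_le (hc : ProperColoring G c) (hm : 2 ≤ m)
    (i j : Fin m) :
    {q ∈ G.pathTuples m w u | i < j ∧ pathColor c q i = pathColor c q j}.ncard ≤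
      Fintype.card V ^ (m - 2) := by
  by_cases hij : i.succ = j.castSucc
  · suffices {q ∈ G.pathTuples m w u | i < j ∧ pathColor c q i = pathColor c q j} = ∅ by
      simp [this]
    refine Set.sep_eq_empty_iff_mem_false.2 fun q hq ⟨_, hcol⟩ => ?_
    have hadj := hq.2.1 j
    rw [← hij] at hadj
    have := hc.eq_of_color_eq (hq.2.1 i).symm hadj
      (by rw [Sym2.eq_swap]; simpa [pathColor, hij] using hcol)
    have := congrArg Fin.val (hq.1 this)
    simp at this; omega
  · refine ncard_le_card_pow_of_color_determined hc hm (fun _ hq => hq.1) j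
      fun q hq q' hq' hoff => ?_
    have hlt := hq.2.1
    have h₁ := hoff i.castSucc
    have h₂ := hoff i.succ
    simp only [Ne, Fin.ext_iff, Fin.val_succ, Fin.val_castSucc, Fin.lt_def] at hij hlt h₁ h₂
    rw [← hq.2.2, ← hq'.2.2, pathColor, pathColor, h₁ (by omega) (by omega),
      h₂ (by omega) (by omega)]

theorem ncard_sub_le_ncard_rainbowClosing (hc : ProperColoring G c) (hm : 2 ≤ m) {d : ℕ}
    (p : Fin (d + 1) → V) :
    (G.pathTuples m w u).ncard - ((m + 1) * (d + 1) + m * d + m * m) * Fintype.card V ^ (m - 2)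
      ≤ {q ∈ G.pathTuples m w u | RainbowClosing c p q}.ncard := by
  set P := G.pathTuples m w u
  set N := Fintype.card V ^ (m - 2)
  set B₁ := ⋃ z : Fin (m + 1) × Fin (d + 1),
    {q ∈ P | z.1 ≠ 0 ∧ z.1 ≠ Fin.last m ∧ q z.1 = p z.2}
  set B₂ := ⋃ z : Fin m × Fin d, {q ∈ P | pathColor c q z.1 = pathColor c p z.2}
  set B₃ := ⋃ z : Fin m × Fin m,
    {q ∈ P | z.1 < z.2 ∧ pathColor c q z.1 = pathColor c q z.2}
  have hB₁ : B₁.ncard ≤ (m + 1) * (d + 1) * N := by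
    refine (Set.ncard_iUnion_le_card_mul (r := N) fun z => ?_).trans_eq (by simp)
    exact ncard_pathTuples_apply_eq_le z.1 (p z.2)
  have hB₂ : B₂.ncard ≤ m * d * N := by
    refine (Set.ncard_iUnion_le_card_mul (r := N) fun z => ?_).trans_eq (by simp)
    exact ncard_pathTuples_pathColor_eq_le hc hm z.1 (pathColor c p z.2)
  have hB₃ : B₃.ncard ≤ m * m * N := by
    refine (Set.ncard_iUnion_le_card_mul (r := N) fun z => ?_).trans_eq (by simp)
    exact ncard_pathTuples_pathColor_eq_pathColor_le hc hm z.1 z.2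
  have hcover : P ⊆ {q ∈ P | RainbowClosing c p q} ∪ (B₁ ∪ B₂ ∪ B₃) := by
    intro q hq
    by_contra hbad
    simp only [Set.mem_union, Set.mem_iUnion, Set.mem_ofPred_eq, not_or, not_exists,
      Prod.forall, not_and, B₁, B₂, B₃] at hbad
    obtain ⟨hclosing, ⟨h₁, h₂⟩, h₃⟩ := hbad
    refine hclosing hq ⟨fun i j hij => ?_, fun i j hij => h₂ i j hq hij, fun i j hij => ?_⟩
    · by_contra! hi
      exact h₁ i j hq hi.1 hi.2 hij
    · by_contra hne
      rcases lt_or_gt_of_ne hne with hlt | hlt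
      exacts [h₃ i j hq hlt hij, h₃ j i hq hlt hij.symm]
  have := (Set.ncard_le_ncard hcover).trans (Set.ncard_union_le _ _)
  have := (Set.ncard_union_le (B₁ ∪ B₂) B₃).trans
    (Nat.add_le_add_right (Set.ncard_union_le B₁ B₂) _)
  rw [Nat.sub_le_iff_le_add, add_mul, add_mul]
  omega

theorem ncard_sub_mul_ncard_rainbowPathTuples_le (hc : ProperColoring G c) (hk : d + m = k)
    (hm : 2 ≤ m) (u w : V) :
    ((G.pathTuples m w u).ncard - ((m + 1) * (d + 1) + m * d + m * m) * Fintype.card V ^ (m - 2))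
      * (G.rainbowPathTuples c d u w).ncard
      ≤ {y ∈ G.rainbowCycleTuples c k | y 0 = u ∧ y d = w}.ncard := by
  refine Set.mul_ncard_le_ncard_of_mapsTo (f := fun y => arc y 0 d) (fun y hy => ?_)
    fun p hp => (ncard_sub_le_ncard_rainbowClosing hc hm p).trans ?_
  · simpa [hy.2.1, hy.2.2] using arc_mem_rainbowPathTuples hy.1 (show d < k by omega) 0
  have hr {q} (hq : q ∈ G.pathTuples m w u) : arc (glue k p q) d m = q :=
    arc_glue_right p q hk (hq.2.2.1.trans hp.1.2.2.2.symm) (hq.2.2.2.trans hp.1.2.2.1.symm)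
  refine Set.ncard_le_ncard_of_injOn (glue k p) (fun q ⟨hq, hpq⟩ => ?_)
    fun q₁ h₁ q₂ h₂ h => by rw [← hr h₁.1, h, hr h₂.1]
  have hl := arc_glue_left (k := k) p q hk (by omega)
  refine ⟨⟨mem_rainbowCycleTuples_of_arc hk (by rwa [hl]) (by rwa [hr hq]) (by rwa [hl, hr hq]),
    ?_, ?_⟩, hl⟩
  · simpa [arc, hp.1.2.2.1] using congrFun hl 0
  · simpa [arc, hp.1.2.2.2] using congrFun hl (Fin.last d)

theorem ncard_minRepeatTuples_fiber_le_mul_rainbowPaths (hc : ProperColoring G c) (hk : d + m = k)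
    (hd : 1 ≤ d) (hm : 2 ≤ m) (u w : V) :
    {x ∈ G.minRepeatTuples c k d | x 1 = u ∧ x (1 + d : ℕ) = w}.ncard ≤
      Fintype.card V ^ (m - 2) * (G.rainbowPathTuples c d u w).ncard := by
  refine Set.ncard_le_mul_ncard_of_mapsTo (f := fun x => arc x 1 d) (fun x hx => ?_)
    fun p _ => ?_
  · have := arc_mem_pathTuples hx.1.1 (show d < k by omega) 1
    rw [Nat.cast_one, hx.2.1, hx.2.2] at this
    exact ⟨this, hx.1.2.2⟩
  have hK : (Finset.Ioi (⟨d + 1, by omega⟩ : Fin k)).card = m - 2 := by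
    rw [Fin.card_Ioi, Fin.val_mk]; omega
  refine hK ▸ Set.ncard_le_card_pow_of_eqOn _ fun x hx x' hx' hxx' => ?_
  have harc : arc x 1 d = arc x' 1 d := hx.2.trans hx'.2.symm
  refine eq_of_forall_ne_of_color_eq hc hx.1.1.1 hx'.1.1.1 (r := 0) (e := d) ?_ ?_
    (by rw [zero_add]; exact hx.1.1.2.1) (by rw [zero_add]; exact hx'.1.1.2.1) fun j hj => ?_
  · rw [Ne, Fin.natCast_eq_zero]
    exact Nat.not_dvd_of_pos_of_lt (by omega) (by omega)
  · rw [← Nat.cast_succ, Ne, Fin.natCast_eq_zero]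
    exact Nat.not_dvd_of_pos_of_lt (by omega) (by omega)
  have hj0 : j.val ≠ 0 := fun h => hj (Fin.ext h)
  by_cases hjd : j.val ≤ d + 1
  · exact apply_eq_of_arc_eq harc (i := j - 1) (by omega)
      (by rw [Nat.add_sub_cancel' (by omega), Nat.mod_eq_of_lt j.isLt])
  · exact hxx' (by simp [Fin.lt_def]; omega)

theorem ncard_minRepeatTuples_fiber_le_mul_paths (hc : ProperColoring G c) (hk : d + m = k)
    (hd : 2 ≤ d) (hm : 2 ≤ m) (u w : V) :
    {x ∈ G.minRepeatTuples c k d | x 1 = u ∧ x (1 + d : ℕ) = w}.ncard ≤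
      Fintype.card V ^ (d - 2) * (G.pathTuples m w u).ncard := by
  refine Set.ncard_le_mul_ncard_of_mapsTo (f := fun x => arc x (1 + d) m) (fun x hx => ?_)
    fun S _ => ?_
  · have := arc_mem_pathTuples hx.1.1 (show m < k by omega) (1 + d)
    rwa [show ((1 + d + m : ℕ) : Fin k) = 1 by
      rw [add_assoc, hk, Nat.cast_add, Fin.natCast_self, add_zero, Nat.cast_one],
      hx.2.1, hx.2.2] at this
  have hK : (Finset.Ioo (⟨1, by omega⟩ : Fin k) ⟨d, by omega⟩).card = d - 2 := by
    rw [Fin.card_Ioo, Fin.val_mk, Fin.val_mk]; omega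
  refine hK ▸ Set.ncard_le_card_pow_of_eqOn _ fun x hx x' hx' hxx' => ?_
  have harc : arc x (1 + d) m = arc x' (1 + d) m := hx.2.trans hx'.2.symm
  refine eq_of_forall_ne_of_color_eq hc hx.1.1.1 hx'.1.1.1 (r := d) (e := 0) ?_ ?_
    (by rw [zero_add]; exact hx.1.1.2.1.symm) (by rw [zero_add]; exact hx'.1.1.2.1.symm)
    fun j hj => ?_
  · rw [Ne, eq_comm, Fin.natCast_eq_zero]
    exact Nat.not_dvd_of_pos_of_lt (by omega) (by omega)
  · rw [zero_add, Ne, Fin.ext_iff, Fin.val_natCast, Nat.mod_eq_of_lt (show d < k by omega),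
      Fin.val_one', Nat.mod_eq_of_lt (show 1 < k by omega)]
    omega
  have hjd : j.val ≠ d := fun h => hj (by rw [← Fin.cast_val_eq_self j, h])
  -- `x 0` and `x 1` are the last two vertices of the closing arc
  rcases lt_or_ge j.val 2 with hj2 | hj2
  · exact apply_eq_of_arc_eq harc (i := m - 1 + j) (by omega) (by
      rw [show 1 + d + (m - 1 + j) = j + k by omega, Nat.add_mod_right, Nat.mod_eq_of_lt j.isLt])
  rcases lt_or_gt_of_ne hjd with hjd | hjd
  · exact hxx' (by simp [Fin.lt_def]; omega)
  · exact apply_eq_of_arc_eq harc (i := j - (1 + d)) (by omega)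
      (by rw [Nat.add_sub_cancel' (by omega), Nat.mod_eq_of_lt j.isLt])

theorem ncard_minRepeatTuples_fiber_le (hc : ProperColoring G c) (hk : d + m = k) (hd : 2 ≤ d)
    (hm : 2 ≤ m) (u w : V) :
    {x ∈ G.minRepeatTuples c k d | x 1 = u ∧ x (1 + d : ℕ) = w}.ncard ≤
      ((m + 1) * (d + 1) + m * d + m * m + 1) * Fintype.card V ^ (m - 2) *
          Fintype.card V ^ (d - 2) +
        {y ∈ G.rainbowCycleTuples c k | y 0 = u ∧ y d = w}.ncard := by
  set A := (m + 1) * (d + 1) + m * d + m * m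
  set N := Fintype.card V ^ (m - 2)
  set P := (G.pathTuples m w u).ncard
  by_cases hP : P ≤ (A + 1) * N
  · calc _ ≤ Fintype.card V ^ (d - 2) * P :=
          ncard_minRepeatTuples_fiber_le_mul_paths hc hk hd hm u w
      _ ≤ Fintype.card V ^ (d - 2) * ((A + 1) * N) := Nat.mul_le_mul_left _ hP
      _ ≤ _ := by rw [mul_comm]; exact Nat.le_add_right _ _
  · have hN : N ≤ P - A * N := by rw [add_mul, one_mul] at hP; omega
    calc _ ≤ N * (G.rainbowPathTuples c d u w).ncard :=
          ncard_minRepeatTuples_fiber_le_mul_rainbowPaths hc hk (by omega) hm u w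
      _ ≤ (P - A * N) * (G.rainbowPathTuples c d u w).ncard := Nat.mul_le_mul_right _ hN
      _ ≤ _ := ncard_sub_mul_ncard_rainbowPathTuples_le hc hk hm u w
      _ ≤ _ := Nat.le_add_left _ _

theorem ncard_minRepeatTuples_le (hc : ProperColoring G c) (hk : d + m = k) (hd : 2 ≤ d)
    (hm : 2 ≤ m) :
    (G.minRepeatTuples c k d).ncard ≤
      ((m + 1) * (d + 1) + m * d + m * m + 1) * Fintype.card V ^ (k - 2) +
        (G.rainbowCycleTuples c k).ncard := by
  rw [Set.ncard_eq_sum_ncard_fiber _ fun x => (x 1, x (1 + d : ℕ)),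
    Set.ncard_eq_sum_ncard_fiber (G.rainbowCycleTuples c k) fun y => (y 0, y d)]
  set A := (m + 1) * (d + 1) + m * d + m * m + 1
  calc _ ≤ ∑ b : V × V, (A * Fintype.card V ^ (m - 2) * Fintype.card V ^ (d - 2) +
          {y ∈ G.rainbowCycleTuples c k | (y 0, y d) = b}.ncard) :=
        Finset.sum_le_sum fun b _ => by
          simpa only [Prod.ext_iff] using ncard_minRepeatTuples_fiber_le hc hk hd hm b.1 b.2
    _ = _ := by
      rw [Finset.sum_add_distrib, Finset.sum_const, Finset.card_univ, Fintype.card_prod,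
        smul_eq_mul, show k - 2 = (m - 2) + (d - 2) + 2 by omega, pow_add, pow_add]
      ring

theorem ncard_nonrainbowCycleTuples_le (hc : ProperColoring G c) (hk : 3 ≤ k) :
    (G.nonrainbowCycleTuples c k).ncard ≤
      k ^ 2 * (3 * k ^ 2 + 1) * (Fintype.card V ^ (k - 2) + (G.rainbowCycleTuples c k).ncard) := by
  set N := Fintype.card V ^ (k - 2)
  set R := (G.rainbowCycleTuples c k).ncard
  set rotate : Fin k → (Fin k → V) → Fin k → V := fun s x j => x (j + s)
  have hB (s : Fin k) (d : ℕ) (hd : d ∈ Finset.Icc 2 (k - 2)) :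
      (rotate s ⁻¹' G.minRepeatTuples c k d).ncard ≤ (3 * k ^ 2 + 1) * N + R := by
    rw [Finset.mem_Icc] at hd
    rw [Set.ncard_preimage_of_injective_subset_range
      (fun x y h => funext fun j => by simpa [rotate] using congrFun h (j - s))
      fun x _ => ⟨fun j => x (j - s), by simp [rotate]⟩]
    refine (ncard_minRepeatTuples_le hc (m := k - d) (by omega) hd.1 (by omega)).trans ?_
    gcongr
    have : k - d + d = k := by omega
    nlinarith
  calc (G.nonrainbowCycleTuples c k).ncard
      ≤ (⋃ s : Fin k, ⋃ d ∈ Finset.Icc 2 (k - 2),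
          rotate s ⁻¹' G.minRepeatTuples c k d).ncard :=
        Set.ncard_le_ncard fun x hx => by
          obtain ⟨s, d, hd, h⟩ := exists_rotate_mem_minRepeatTuples hc hk hx
          exact Set.mem_iUnion.2 ⟨s, Set.mem_iUnion₂.2 ⟨d, hd, h⟩⟩
    _ ≤ ∑ s : Fin k, ∑ d ∈ Finset.Icc 2 (k - 2),
          (rotate s ⁻¹' G.minRepeatTuples c k d).ncard :=
        (Set.ncard_iUnion_le_of_fintype _).trans
          (Finset.sum_le_sum fun s _ => Finset.set_ncard_biUnion_le _ _)
    _ ≤ ∑ _s : Fin k, ∑ _d ∈ Finset.Icc 2 (k - 2), ((3 * k ^ 2 + 1) * N + R) :=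
        Finset.sum_le_sum fun s _ => Finset.sum_le_sum (hB s)
    _ = k * (k - 3) * ((3 * k ^ 2 + 1) * N + R) := by
        simp only [Finset.sum_const, Nat.card_Icc, Finset.card_univ, Fintype.card_fin, smul_eq_mul]
        rw [show k - 2 + 1 - 2 = k - 3 by omega, mul_assoc]
    _ ≤ k ^ 2 * ((3 * k ^ 2 + 1) * (N + R)) :=
        Nat.mul_le_mul (by rw [sq]; exact Nat.mul_le_mul_left _ (Nat.sub_le k 3)) (by nlinarith)
    _ = _ := by ring

end SimpleGraph

/-- in any properly edge-coloured graph on `n` vertices, the number of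
non-rainbow copies of `C_{2l+1}` is at most `C·(n^{2l-1} + R)`, where `R` is the number
of rainbow copies (copies counted as injective cyclic vertex sequences). -/
theorem nonrainbow_odd_cycles_bound (l : ℕ) (hl : 2 ≤ l) :
    ∃ C : ℕ, ∀ (V : Type) [Fintype V] (G : SimpleGraph V) (γ : Type) (c : Sym2 V → γ),
      ProperColoring G c →
      {x : Fin (2 * l + 1) → V | Function.Injective x ∧
          (∀ i, G.Adj (x i) (x (i + 1))) ∧
          ¬ Function.Injective (fun i => c s(x i, x (i + 1)))}.ncard
        ≤ C * (Fintype.card V ^ (2 * l - 1) +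
            {x : Fin (2 * l + 1) → V | Function.Injective x ∧
              (∀ i, G.Adj (x i) (x (i + 1))) ∧
              Function.Injective (fun i => c s(x i, x (i + 1)))}.ncard) := by
  refine ⟨(2 * l + 1) ^ 2 * (3 * (2 * l + 1) ^ 2 + 1), fun V _ G γ c hc => ?_⟩
  have := G.ncard_nonrainbowCycleTuples_le hc (k := 2 * l + 1) (by omega)
  rwa [show 2 * l + 1 - 2 = 2 * l - 1 by omega] at this
end

section
/- Let k ≥ 2 and let G be a properly edge-coloured graph on n vertices with no rainbow cycle of length 2k. Then the number of triangles in G is at most C·|E(G)| for a constant C depending only on k. In particular, ex(n, C_3, rainbow-C_{2k}) = O(ex*(n, C_{2k})). -/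
open SimpleGraph

/-!
Deleting, one at a time, the edges that lie in fewer than `C` triangles destroys at most `6C`
ordered triangles per deleted edge. So if `G` has more than `6C·|E(G)|` ordered triangles, a
nonempty subgraph `H` survives in which every edge has at least `C = 10k` common neighbours.
In `H` one grows greedily a rainbow copy of the square of a path `v₀ v₁ ⋯ v_{2k-1}`: the next
vertex is a common neighbour of the last two that is new and whose two edges avoid the at most
`2·2k` colours already used; by properness each used colour rules out at most one neighbour of
each of the two vertices. The square of a path on `2k` vertices has the Hamiltonian cycle
`v₀ v₂ v₄ ⋯ v₅ v₃ v₁`, a rainbow `C_{2k}`.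
-/

section

variable {V γ : Type*} {G H : SimpleGraph V} {c : Sym2 V → γ}

theorem ProperColoring.anti (h : H ≤ G) (hc : ProperColoring G c) : ProperColoring H c :=
  fun e f he hf => hc e f (edgeSet_mono h he) (edgeSet_mono h hf)

theorem HasRainbowCycle.mono {t : ℕ} (h : H ≤ G) :
    HasRainbowCycle H c t → HasRainbowCycle G c t :=
  fun ⟨u, w, hw, hlen, hrb⟩ =>
    ⟨u, w.mapLe h, hw.mapLe h, by simpa using hlen, by simpa using hrb⟩

theorem ProperColoring.injOn_neighborSet (hc : ProperColoring G c) (x : V) :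
    Set.InjOn (fun z => c s(x, z)) (G.neighborSet x) := by
  intro z hz z' hz' h
  by_contra hne
  exact hc _ _ hz hz' (fun h' => hne (Sym2.congr_right.mp h')) ⟨x, by simp, by simp⟩ h

theorem ProperColoring.ncard_setOf_adj_color_mem_le (hc : ProperColoring G c) (x : V)
    {K : Set γ} (hK : K.Finite) : {z | G.Adj x z ∧ c s(x, z) ∈ K}.ncard ≤ K.ncard :=
  Set.ncard_le_ncard_of_injOn _ (fun _ hz => hz.2)
    ((hc.injOn_neighborSet x).mono fun _ hz => hz.1) hK

theorem ProperColoring.exists_mem_commonNeighbors_avoiding [Finite V] (hc : ProperColoring G c)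
    {x y : V} {S : Set V} {K : Set γ} (hK : K.Finite)
    (h : S.ncard + 2 * K.ncard < (G.commonNeighbors x y).ncard) :
    ∃ z ∈ G.commonNeighbors x y, z ∉ S ∧ c s(x, z) ∉ K ∧ c s(y, z) ∉ K := by
  by_contra! hbad
  have hsub : G.commonNeighbors x y ⊆
      S ∪ {z | G.Adj x z ∧ c s(x, z) ∈ K} ∪ {z | G.Adj y z ∧ c s(y, z) ∈ K} := by
    intro z hz
    by_cases hzS : z ∈ S
    · exact .inl (.inl hzS)
    by_cases hxz : c s(x, z) ∈ K
    · exact .inl (.inr ⟨hz.1, hxz⟩)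
    · exact .inr ⟨hz.2, hbad z hz hzS hxz⟩
  have := (Set.ncard_le_ncard hsub).trans
    ((Set.ncard_union_le _ _).trans (Nat.add_le_add_right (Set.ncard_union_le _ _) _))
  have := hc.ncard_setOf_adj_color_mem_le x hK
  have := hc.ncard_setOf_adj_color_mem_le y hK
  omega

/-- The square of the path `0 - 1 - ⋯ - (m-1)`, as a graph on `ℕ` in which every `n ≥ m` is
isolated. -/
def pathSquare (m : ℕ) : SimpleGraph ℕ where
  Adj a b := a < m ∧ b < m ∧ a ≠ b ∧ a ≤ b + 2 ∧ b ≤ a + 2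
  symm := ⟨fun _ _ h => by omega⟩
  loopless := ⟨fun _ h => by omega⟩

@[simp]
theorem pathSquare_adj {m a b : ℕ} :
    (pathSquare m).Adj a b ↔ a < m ∧ b < m ∧ a ≠ b ∧ a ≤ b + 2 ∧ b ≤ a + 2 :=
  Iff.rfl

theorem pathSquare_edgeSet_two : (pathSquare 2).edgeSet = {s(0, 1)} := by
  ext e
  induction e using Sym2.ind with
  | h a b => simp only [mem_edgeSet, pathSquare_adj, Set.mem_singleton_iff, Sym2.eq_iff]; omega

theorem pathSquare_edgeSet_succ {m : ℕ} (hm : 2 ≤ m) :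
    (pathSquare (m + 1)).edgeSet =
      insert s(m - 1, m) (insert s(m - 2, m) (pathSquare m).edgeSet) := by
  ext e
  induction e using Sym2.ind with
  | h a b =>
    simp only [mem_edgeSet, pathSquare_adj, Set.mem_insert_iff, Sym2.eq_iff]
    omega

theorem pathSquare_edgeSet_subset (m : ℕ) :
    (pathSquare m).edgeSet ⊆
      (fun p : ℕ × ℕ => s(p.1 - p.2, p.1)) '' (Set.Iio m ×ˢ {1, 2}) := by
  intro e he
  induction e using Sym2.ind with
  | h a b =>
    obtain ⟨ha, hb, hab, hba, hab'⟩ := pathSquare_adj.mp he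
    refine ⟨(max a b, max a b - min a b), ?_, ?_⟩
    · simp only [Set.mem_prod, Set.mem_Iio, Set.mem_insert_iff, Set.mem_singleton_iff]
      omega
    · dsimp only
      rw [Sym2.eq_iff]
      omega

theorem pathSquare_edgeSet_finite (m : ℕ) : (pathSquare m).edgeSet.Finite :=
  (((Set.finite_Iio m).prod (Set.toFinite _)).image _).subset (pathSquare_edgeSet_subset m)

theorem pathSquare_edgeSet_ncard_le (m : ℕ) : (pathSquare m).edgeSet.ncard ≤ 2 * m := by
  have hfin : (Set.Iio m ×ˢ ({1, 2} : Set ℕ)).Finite := (Set.finite_Iio m).prod (Set.toFinite _)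
  calc (pathSquare m).edgeSet.ncard
      ≤ ((fun p : ℕ × ℕ => s(p.1 - p.2, p.1)) '' (Set.Iio m ×ˢ {1, 2})).ncard :=
        Set.ncard_le_ncard (pathSquare_edgeSet_subset m) (hfin.image _)
    _ ≤ (Set.Iio m ×ˢ ({1, 2} : Set ℕ)).ncard := Set.ncard_image_le hfin
    _ = 2 * m := by rw [Set.ncard_prod, Set.ncard_pair (by norm_num), Set.ncard_Iio_nat, mul_comm]

theorem mk_notMem_pathSquare_edgeSet (i m : ℕ) : s(i, m) ∉ (pathSquare m).edgeSet := by
  simp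

theorem eqOn_map_update_pathSquare_edgeSet (f : ℕ → V) (m : ℕ) (z : V) :
    Set.EqOn (Sym2.map (Function.update f m z)) (Sym2.map f) (pathSquare m).edgeSet := by
  intro e he
  induction e using Sym2.ind with
  | h a b =>
    obtain ⟨ha, hb, -⟩ := pathSquare_adj.mp he
    simp only [Sym2.map_mk, Function.update_of_ne ha.ne, Function.update_of_ne hb.ne]

structure IsRainbowPathSquare (H : SimpleGraph V) (c : Sym2 V → γ) (m : ℕ) (f : ℕ → V) :
    Prop where
  injOn : Set.InjOn f (Set.Iio m)
  mapsTo : Set.MapsTo (Sym2.map f) (pathSquare m).edgeSet H.edgeSet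
  rainbow : Set.InjOn (fun e => c (e.map f)) (pathSquare m).edgeSet

namespace IsRainbowPathSquare

theorem adj {m : ℕ} {f : ℕ → V} (hf : IsRainbowPathSquare H c m f) {a b : ℕ}
    (h : (pathSquare m).Adj a b) : H.Adj (f a) (f b) :=
  hf.mapsTo (x := s(a, b)) h

theorem two {u v : V} (huv : H.Adj u v) :
    IsRainbowPathSquare H c 2 (fun i => if i = 0 then u else v) where
  injOn i hi j hj h := by
    simp only [Set.mem_Iio] at hi hj
    interval_cases i <;> interval_cases j <;> simp_all [huv.ne, huv.ne.symm]
  mapsTo := by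
    rw [pathSquare_edgeSet_two, Set.mapsTo_singleton]
    simpa using huv
  rainbow := by
    rw [pathSquare_edgeSet_two]
    exact Set.injOn_singleton _ _

theorem update {m : ℕ} {f : ℕ → V} {z : V} (hf : IsRainbowPathSquare H c m f) (hm : 2 ≤ m)
    (hc : ProperColoring H c) (hz : z ∈ H.commonNeighbors (f (m - 2)) (f (m - 1)))
    (hzf : z ∉ f '' Set.Iio m)
    (hzc : c s(f (m - 2), z) ∉ (fun e => c (e.map f)) '' (pathSquare m).edgeSet ∧
      c s(f (m - 1), z) ∉ (fun e => c (e.map f)) '' (pathSquare m).edgeSet) :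
    IsRainbowPathSquare H c (m + 1) (Function.update f m z) := by
  set f' := Function.update f m z
  have hf'f : Set.EqOn f' f (Set.Iio m) := fun i hi => Function.update_of_ne (ne_of_lt hi) _ _
  have hf'fE := eqOn_map_update_pathSquare_edgeSet f m z
  have hcolE : Set.EqOn (fun e => c (e.map f')) (fun e => c (e.map f)) (pathSquare m).edgeSet :=
    fun e he => congrArg c (hf'fE he)
  have hnew : ∀ i < m, Sym2.map f' s(i, m) = s(f i, z) := fun i hi => by
    simp [f', Function.update_of_ne (ne_of_lt hi)]
  have hne : f (m - 2) ≠ f (m - 1) := fun h => by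
    have := hf.injOn (Set.mem_Iio.2 (by omega)) (Set.mem_Iio.2 (by omega)) h
    omega
  refine ⟨?_, ?_, ?_⟩
  · rw [← Order.succ_eq_add_one, Order.Iio_succ_eq_insert, Set.injOn_insert (by simp),
      hf'f.image_eq]
    exact ⟨hf.injOn.congr hf'f.symm, by simpa [f'] using hzf⟩
  · rw [pathSquare_edgeSet_succ hm]
    rintro e (rfl | rfl | he)
    · exact hnew (m - 1) (by omega) ▸ hz.2
    · exact hnew (m - 2) (by omega) ▸ hz.1
    · exact hf'fE he ▸ hf.mapsTo he
  · rw [pathSquare_edgeSet_succ hm, Set.injOn_insert,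
      Set.injOn_insert (mk_notMem_pathSquare_edgeSet _ _), Set.image_insert_eq, hcolE.image_eq]
    · simp only [hnew (m - 1) (by omega), hnew (m - 2) (by omega), Set.mem_insert_iff, not_or]
      refine ⟨⟨hf.rainbow.congr hcolE.symm, hzc.1⟩, fun h => hne ?_, hzc.2⟩
      refine hc.injOn_neighborSet z hz.1.symm hz.2.symm ?_
      simpa only [Sym2.eq_swap] using h.symm
    · simp only [Set.mem_insert_iff, not_or]
      exact ⟨by rw [Sym2.eq_iff]; omega, mk_notMem_pathSquare_edgeSet _ _⟩

end IsRainbowPathSquare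

theorem exists_isRainbowPathSquare [Finite V] (hc : ProperColoring H c) {u v : V}
    (huv : H.Adj u v) {m : ℕ} (hm : 2 ≤ m)
    (hH : ∀ x y, H.Adj x y → 5 * m ≤ (H.commonNeighbors x y).ncard) :
    ∃ f, IsRainbowPathSquare H c m f := by
  suffices ∀ n, 2 ≤ n → n ≤ m → ∃ f, IsRainbowPathSquare H c n f from this m hm le_rfl
  intro n hn
  induction n, hn using Nat.le_induction with
  | base => exact fun _ => ⟨_, .two huv⟩
  | succ n hn ih =>
    intro hnm
    obtain ⟨f, hf⟩ := ih (by omega)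
    have hxy : H.Adj (f (n - 2)) (f (n - 1)) :=
      hf.adj (by simp only [pathSquare_adj]; omega)
    have hS : (f '' Set.Iio n).ncard ≤ n :=
      (Set.ncard_image_le (Set.finite_Iio n)).trans (by simp)
    have hK : ((fun e => c (e.map f)) '' (pathSquare n).edgeSet).ncard ≤ 2 * n :=
      (Set.ncard_image_le (pathSquare_edgeSet_finite n)).trans (pathSquare_edgeSet_ncard_le n)
    have hW := hH _ _ hxy
    obtain ⟨z, hz, hzS, hzK⟩ := hc.exists_mem_commonNeighbors_avoiding (x := f (n - 2))
      (y := f (n - 1)) (S := f '' Set.Iio n)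
      ((pathSquare_edgeSet_finite n).image fun e => c (e.map f)) (by omega)
    exact ⟨_, hf.update hn hc hz hzS hzK⟩

/-- The `j`-th vertex of the Hamiltonian cycle `0, 2, 4, …, 5, 3, 1` of `pathSquare m`. -/
def zigzag (m j : ℕ) : ℕ := if 2 * j < m then 2 * j else 2 * (m - j) - 1

theorem zigzag_lt {m j : ℕ} (hj : j < m) : zigzag m j < m := by
  unfold zigzag
  split_ifs <;> omega

theorem zigzag_injective (m : ℕ) : Function.Injective fun j : Fin m => zigzag m j := by
  intro i j h
  have := i.2
  have := j.2
  simp only [zigzag] at h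
  ext
  split_ifs at h <;> omega

theorem pathSquare_adj_zigzag {m : ℕ} (hm : 3 ≤ m) {i j : Fin m} (h : (cycleGraph m).Adj i j) :
    (pathSquare m).Adj (zigzag m i) (zigzag m j) := by
  have hstep : ∀ a b : Fin m, (a - b).val = 1 →
      a.val = b.val + 1 ∨ (a.val = 0 ∧ b.val + 1 = m) := by
    intro a b hab
    rcases le_or_gt b a with hba | hba
    · rw [Fin.coe_sub_iff_le.mpr hba] at hab
      omega
    · rw [Fin.coe_sub_iff_lt.mpr hba] at hab
      omega
  have := i.2
  have := j.2
  rw [cycleGraph_adj'] at h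
  rw [pathSquare_adj]
  unfold zigzag
  rcases h with h | h <;> rcases hstep _ _ h with h | h <;> split_ifs <;> omega

theorem hasRainbowCycle_of_cycleGraph_hom {n : ℕ} (φ : cycleGraph (n + 3) →g H)
    (hφ : Function.Injective φ)
    (hrb : Set.InjOn (fun e => c (e.map φ)) (cycleGraph (n + 3)).edgeSet) :
    HasRainbowCycle H c (n + 3) := by
  have hcyc : (cycleGraph.cycle n).IsCycle := cycleGraph.isCycle_cycle
  refine ⟨φ 0, (cycleGraph.cycle n).map φ, hcyc.map hφ, by simp, ?_⟩
  rw [Walk.edges_map, List.map_map]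
  exact hcyc.edges_nodup.map_on fun e he e' he' h =>
    hrb (Walk.edges_subset_edgeSet _ he) (Walk.edges_subset_edgeSet _ he') h

theorem IsRainbowPathSquare.hasRainbowCycle {m : ℕ} {f : ℕ → V}
    (hf : IsRainbowPathSquare H c m f) (hm : 3 ≤ m) : HasRainbowCycle H c m := by
  obtain ⟨n, rfl⟩ : ∃ n, m = n + 3 := ⟨m - 3, by omega⟩
  have hmaps : Set.MapsTo (Sym2.map fun j : Fin (n + 3) => zigzag (n + 3) j)
      (cycleGraph (n + 3)).edgeSet (pathSquare (n + 3)).edgeSet := by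
    intro e he
    induction e using Sym2.ind with
    | h i j => exact pathSquare_adj_zigzag (by omega) he
  refine hasRainbowCycle_of_cycleGraph_hom
    ⟨fun j => f (zigzag (n + 3) j), fun h => hf.adj (pathSquare_adj_zigzag (by omega) h)⟩
    (fun i j h => zigzag_injective _ (hf.injOn (zigzag_lt i.2) (zigzag_lt j.2) h)) ?_
  intro e he e' he' h
  refine Sym2.map.injective (zigzag_injective _) (hf.rainbow (hmaps he) (hmaps he') ?_)
  simpa [Sym2.map_map] using h

def orderedTriangles (G : SimpleGraph V) : Set (V × V × V) :=
  {t | G.Adj t.1 t.2.1 ∧ G.Adj t.2.1 t.2.2 ∧ G.Adj t.1 t.2.2}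

theorem orderedTriangles_ncard_le_deleteEdges [Finite V] (G : SimpleGraph V) (u v : V) :
    (orderedTriangles G).ncard ≤
      (orderedTriangles (G.deleteEdges {s(u, v)})).ncard + 6 * (G.commonNeighbors u v).ncard := by
  set W := G.commonNeighbors u v
  let σ : Fin 6 → V → V × V × V := ![fun w => (u, v, w), fun w => (v, u, w),
    fun w => (u, w, v), fun w => (v, w, u), fun w => (w, u, v), fun w => (w, v, u)]
  have hsub : orderedTriangles G ⊆
      orderedTriangles (G.deleteEdges {s(u, v)}) ∪ ⋃ i, σ i '' W := by
    rintro ⟨x, y, z⟩ ⟨hxy, hyz, hxz⟩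
    by_cases e1 : s(x, y) = s(u, v)
    · rcases Sym2.eq_iff.mp e1 with ⟨rfl, rfl⟩ | ⟨rfl, rfl⟩
      · exact .inr (Set.mem_iUnion.2 ⟨0, z, ⟨hxz, hyz⟩, rfl⟩)
      · exact .inr (Set.mem_iUnion.2 ⟨1, z, ⟨hyz, hxz⟩, rfl⟩)
    by_cases e2 : s(y, z) = s(u, v)
    · rcases Sym2.eq_iff.mp e2 with ⟨rfl, rfl⟩ | ⟨rfl, rfl⟩
      · exact .inr (Set.mem_iUnion.2 ⟨4, x, ⟨hxy.symm, hxz.symm⟩, rfl⟩)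
      · exact .inr (Set.mem_iUnion.2 ⟨5, x, ⟨hxz.symm, hxy.symm⟩, rfl⟩)
    by_cases e3 : s(x, z) = s(u, v)
    · rcases Sym2.eq_iff.mp e3 with ⟨rfl, rfl⟩ | ⟨rfl, rfl⟩
      · exact .inr (Set.mem_iUnion.2 ⟨2, y, ⟨hxy, hyz.symm⟩, rfl⟩)
      · exact .inr (Set.mem_iUnion.2 ⟨3, y, ⟨hyz.symm, hxy⟩, rfl⟩)
    exact .inl ⟨deleteEdges_adj.2 ⟨hxy, e1⟩, deleteEdges_adj.2 ⟨hyz, e2⟩,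
      deleteEdges_adj.2 ⟨hxz, e3⟩⟩
  calc (orderedTriangles G).ncard
      ≤ (orderedTriangles (G.deleteEdges {s(u, v)})).ncard + ∑ i, (σ i '' W).ncard :=
        (Set.ncard_le_ncard hsub (Set.toFinite _)).trans ((Set.ncard_union_le _ _).trans
          (Nat.add_le_add_left (Set.ncard_iUnion_le_of_fintype _) _))
    _ ≤ (orderedTriangles (G.deleteEdges {s(u, v)})).ncard + ∑ _i : Fin 6, W.ncard := by
        gcongr
        exact Set.ncard_image_le (Set.toFinite W)
    _ = _ := by simp

theorem exists_le_forall_le_ncard_commonNeighbors [Finite V] (C : ℕ) (G : SimpleGraph V)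
    (hG : 6 * C * G.edgeSet.ncard < (orderedTriangles G).ncard) :
    ∃ H ≤ G, (∃ u v, H.Adj u v) ∧
      ∀ u v, H.Adj u v → C ≤ (H.commonNeighbors u v).ncard := by
  induction hE : G.edgeSet.ncard using Nat.strong_induction_on generalizing G with
  | _ n ih =>
  by_cases hP : ∀ u v, G.Adj u v → C ≤ (G.commonNeighbors u v).ncard
  · obtain ⟨⟨x, y, z⟩, hxyz⟩ :=
      Set.nonempty_of_ncard_ne_zero (by omega : (orderedTriangles G).ncard ≠ 0)
    exact ⟨G, le_rfl, ⟨x, y, hxyz.1⟩, hP⟩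
  push Not at hP
  obtain ⟨u, v, huv, hW⟩ := hP
  have hE' : (G.deleteEdges {s(u, v)}).edgeSet.ncard + 1 = G.edgeSet.ncard := by
    rw [edgeSet_deleteEdges, Set.ncard_sdiff_singleton_add_one (G.mem_edgeSet.2 huv)]
  have hmul : 6 * C * G.edgeSet.ncard =
      6 * C * (G.deleteEdges {s(u, v)}).edgeSet.ncard + 6 * C := by
    rw [← hE', mul_add_one]
  have hT := orderedTriangles_ncard_le_deleteEdges G u v
  obtain ⟨H, hHG, hH⟩ := ih _ (by omega) (G.deleteEdges {s(u, v)}) (by omega) rfl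
  exact ⟨H, hHG.trans (deleteEdges_le _), hH⟩

end

/-- a properly edge-coloured graph with no rainbow `C_{2k}` has at most
`C·|E(G)|` triangles, for a constant `C` depending only on `k`.  (This yields
`ex(n, C₃, rainbow-C_{2k}) = O(ex*(n, C_{2k}))`.) -/
theorem triangles_le_const_mul_edges (k : ℕ) (hk : 2 ≤ k) :
    ∃ C : ℕ, ∀ (V : Type) [Fintype V] (G : SimpleGraph V) (γ : Type) (c : Sym2 V → γ),
      ProperColoring G c → ¬ HasRainbowCycle G c (2 * k) →
      {t : V × V × V | G.Adj t.1 t.2.1 ∧ G.Adj t.2.1 t.2.2 ∧ G.Adj t.1 t.2.2}.ncard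
        ≤ C * G.edgeSet.ncard := by
  refine ⟨6 * (5 * (2 * k)), fun V _ G γ c hc hG => ?_⟩
  by_contra! hT
  obtain ⟨H, hHG, ⟨u, v, huv⟩, hH⟩ := exists_le_forall_le_ncard_commonNeighbors _ G hT
  obtain ⟨f, hf⟩ := exists_isRainbowPathSquare (hc.anti hHG) huv (by omega) hH
  exact hG ((hf.hasRainbowCycle (by omega)).mono hHG)
end
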